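/- arXiv:2407.19317 — 8 statements merged into one kernel-verified Lean document; each statement's English description precedes it below -/
import Mathlib

section
/- Let A be a commutative unital ring and a, u, v, b ∈ A with uv−1 invertible. Then M_4(a, u, v, b) = M_3(a + (1−v)(uv−1)^{-1}, uv−1, b + (1−u)(uv−1)^{-1}). -/
/-- `Mₙ(a₁,…,aₙ) = [[aₙ,−1],[1,0]]·[[a_{n−1},−1],[1,0]]⋯[[a₁,−1],[1,0]]`. -/
def Mn {A : Type} [CommRing A] : (n : ℕ) → (Fin n → A) → Matrix (Fin 2) (Fin 2) A
  | 0, _ => 1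
  | n+1, a => !![a (Fin.last n), -1; 1, 0] * Mn n (fun i => a i.castSucc)

theorem M4_eq_M3 {A : Type} [CommRing A] (a u v b : A) (h : Invertible (u * v - 1)) :
    Mn 4 ![a, u, v, b] =
      Mn 3 ![a + (1 - v) * ⅟(u * v - 1), u * v - 1, b + (1 - u) * ⅟(u * v - 1)] := by
  have hi : (u * v - 1) * ⅟(u * v - 1) = 1 := mul_invOf_self _
  ext i j
  fin_cases i <;> fin_cases j <;>
    simp [Mn, Matrix.mul_fin_two, Fin.last, show (Fin.castSucc 2 : Fin 4) = 2 from rfl]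
  · linear_combination (-(b*(1-v) + (1-u)*(1-v)*⅟(u*v-1) + (1+a-u*a))) * hi
  · linear_combination (1-u) * hi
  · linear_combination (-(1-v)) * hi
  · linear_combination (0:A) * hi
end

section
/- Let A be a commutative unital ring and a, u, v, b, c ∈ A with v invertible and x := ((vb−1)(uv−1)−1)v^{-1} invertible. Then M_5(a, u, v, b, c) = M_3(a − (vb−2)x^{-1}, x, c − (uv−2)x^{-1}). -/
theorem M5_eq_M3 {A : Type} [CommRing A] (a u v b c x : A) (hv : Invertible v)
    (hx : x = ((v * b - 1) * (u * v - 1) - 1) * ⅟v) (hxu : Invertible x) :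
    Mn 5 ![a, u, v, b, c] =
      Mn 3 ![a - (v * b - 2) * ⅟x, x, c - (u * v - 2) * ⅟x] := by
  have h2 : ⅟x * x = 1 := invOf_mul_self x
  have hX : x = u * v * b - b - u := by
    rw [hx]; linear_combination (u*v*b - b - u) * (mul_invOf_self v)
  ext i j
  fin_cases i <;> fin_cases j <;>
    simp [Mn, Matrix.mul_apply, Fin.sum_univ_succ, Matrix.one_apply, Fin.last,
      Fin.castSucc, Fin.castAdd, Fin.castLE,
      show ((1 : Fin 2) : ℕ) = 1 from rfl, show ((2 : Fin 3) : ℕ) = 2 from rfl,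
      show ((3 : Fin 4) : ℕ) = 3 from rfl]
  · linear_combination (-a*c + v*⅟x)*hX +
      (c*(v*b-2) + a*(u*v-2) - (u*v-2)*(v*b-2)*⅟x - v)*h2
  · linear_combination c*hX - (u*v-2)*h2
  · linear_combination (-a)*hX + (v*b-2)*h2
  · linear_combination hX
end

section
/- Let A be a commutative unital ring, λ and u invertible in A, and n = 2l+1 ≥ 3 odd. If M_n(a_1,…,a_n) = diag(u, u^{-1}), then M_n(λa_1, λ^{-1}a_2, …, λ^{-1}a_{2l}, λa_{2l+1}) = diag(λu, λ^{-1}u^{-1}). -/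
lemma Mn_scale {A : Type} [CommRing A] (lam : Aˣ) :
    ∀ n (a : Fin (n+1) → A),
      Mn (n+1) (fun i => if (i : ℕ) % 2 = 0 then (lam : A) * a i else ((lam⁻¹ : Aˣ) : A) * a i)
        = (if n % 2 = 0 then !![(lam : A), 0; 0, 1] else !![1, 0; 0, (lam : A)])
          * Mn (n+1) a * !![1, 0; 0, ((lam⁻¹ : Aˣ) : A)] := by
  intro n
  induction n with
  | zero =>
    intro a
    show !![_, -1; 1, 0] * Mn 0 _ = _
    simp only [Mn, mul_one, Nat.zero_mod, Fin.val_last, Nat.zero_mod, if_true]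
    norm_num [Matrix.mul_fin_two]
  | succ m ih =>
    intro a
    have hinner : (fun i : Fin (m+1) =>
        (fun i : Fin (m+2) => if (i : ℕ) % 2 = 0 then (lam : A) * a i
          else ((lam⁻¹ : Aˣ) : A) * a i) i.castSucc)
        = fun i : Fin (m+1) => if (i : ℕ) % 2 = 0 then (lam : A) * (a i.castSucc)
          else ((lam⁻¹ : Aˣ) : A) * (a i.castSucc) := by
      funext i; simp [Fin.coe_castSucc]
    show !![_, -1; 1, 0] * Mn (m+1) _ = _
    rw [hinner, ih (fun i => a i.castSucc)]
    have hMn : Mn (m+1+1) a = !![a (Fin.last (m+1)), -1; 1, 0]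
        * Mn (m+1) (fun i => a i.castSucc) := rfl
    simp only [Fin.val_last]
    rcases Nat.even_or_odd m with hm | hm
    · have h1 : m % 2 = 0 := Nat.even_iff.mp hm
      have h2 : (m + 1) % 2 = 1 := by omega
      rw [if_neg (by omega : ¬ (m+1) % 2 = 0), if_pos h1,
        if_neg (by omega : ¬ (m+1) % 2 = 0), hMn]
      have key : !![((lam⁻¹ : Aˣ) : A) * a (Fin.last (m+1)), -1; 1, 0]
          * !![(lam : A), 0; 0, 1]
          = !![1, 0; 0, (lam : A)] * !![a (Fin.last (m+1)), -1; 1, 0] := by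
        rw [Matrix.mul_fin_two, Matrix.mul_fin_two]
        congr 1 <;> ring_nf <;> simp [Units.inv_mul, mul_comm]
      calc !![((lam⁻¹ : Aˣ) : A) * a (Fin.last (m+1)), -1; 1, 0] *
            (!![(lam : A), 0; 0, 1] * Mn (m+1) (fun i => a i.castSucc)
              * !![1, 0; 0, ((lam⁻¹ : Aˣ) : A)])
          = (!![((lam⁻¹ : Aˣ) : A) * a (Fin.last (m+1)), -1; 1, 0] * !![(lam : A), 0; 0, 1])
            * Mn (m+1) (fun i => a i.castSucc) * !![1, 0; 0, ((lam⁻¹ : Aˣ) : A)] := by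
            simp only [Matrix.mul_assoc]
        _ = _ := by rw [key]; simp only [Matrix.mul_assoc]
    · have h1 : m % 2 = 1 := Nat.odd_iff.mp hm
      rw [if_pos (by omega : (m+1) % 2 = 0), if_neg (by omega : ¬ m % 2 = 0),
        if_pos (by omega : (m+1) % 2 = 0), hMn]
      have key : !![(lam : A) * a (Fin.last (m+1)), -1; 1, 0]
          * !![1, 0; 0, (lam : A)]
          = !![(lam : A), 0; 0, 1] * !![a (Fin.last (m+1)), -1; 1, 0] := by
        rw [Matrix.mul_fin_two, Matrix.mul_fin_two]
        congr 1 <;> ring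
      calc !![(lam : A) * a (Fin.last (m+1)), -1; 1, 0] *
            (!![1, 0; 0, (lam : A)] * Mn (m+1) (fun i => a i.castSucc)
              * !![1, 0; 0, ((lam⁻¹ : Aˣ) : A)])
          = (!![(lam : A) * a (Fin.last (m+1)), -1; 1, 0] * !![1, 0; 0, (lam : A)])
            * Mn (m+1) (fun i => a i.castSucc) * !![1, 0; 0, ((lam⁻¹ : Aˣ) : A)] := by
            simp only [Matrix.mul_assoc]
        _ = _ := by rw [key]; simp only [Matrix.mul_assoc]

/-- If `n = 2l+1 ≥ 3` is odd and `M_n(a₁,…,aₙ) = diag(u, u⁻¹)`, then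
`M_n(λa₁, λ⁻¹a₂, …, λ⁻¹a_{2l}, λa_{2l+1}) = diag(λu, λ⁻¹u⁻¹)`.
(Indices are 0-based: entries in even positions are scaled by `λ`.) -/
theorem Mn_odd_scaling {A : Type} [CommRing A] (lam u : Aˣ) (l : ℕ) (hl : 1 ≤ l)
    (a : Fin (2 * l + 1) → A)
    (h : Mn (2 * l + 1) a = !![(u : A), 0; 0, ((u⁻¹ : Aˣ) : A)]) :
    Mn (2 * l + 1)
      (fun i => if (i : ℕ) % 2 = 0 then (lam : A) * a i else ((lam⁻¹ : Aˣ) : A) * a i)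
      = !![(lam : A) * (u : A), 0; 0, ((lam⁻¹ : Aˣ) : A) * ((u⁻¹ : Aˣ) : A)] := by
  have := Mn_scale lam (2 * l) a
  rw [h, if_pos (by omega : (2 * l) % 2 = 0)] at this
  rw [this, Matrix.mul_fin_two, Matrix.mul_fin_two]
  congr 1 <;> ring
end

section
/- Let A be a commutative unital ring, u a unit of A, and a a non-unit of A. For every n ≥ 2 there exists (a_1,…,a_n) ∈ A^n with K_n(a_1,…,a_n) = a and K_{n−1}(a_1,…,a_{n−1}) = u. -/
/-- Continuants: `K₀ = 1`, `K₁(x₁) = x₁`,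
`Kₙ(x₁,…,xₙ) = xₙ·K_{n-1}(x₁,…,x_{n-1}) − K_{n-2}(x₁,…,x_{n-2})`. -/
def cont {A : Type} [CommRing A] : (n : ℕ) → (Fin n → A) → A
  | 0, _ => 1
  | 1, a => a 0
  | n+2, a => a (Fin.last (n+1)) * cont (n+1) (fun i => a i.castSucc)
      - cont n (fun i => a i.castSucc.castSucc)

lemma cont_aux {A : Type} [CommRing A] :
    ∀ (n : ℕ) (u : Aˣ) (x : A), ∃ a : Fin (n+2) → A,
      cont (n+2) a = x ∧ cont (n+1) (fun i => a i.castSucc) = (u : A) := by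
  intro n
  induction n with
  | zero =>
    intro u x
    refine ⟨![(u : A), (x + 1) * (u⁻¹ : Aˣ)], ?_, ?_⟩
    · show _ * cont 1 _ - cont 0 _ = x
      show (x + 1) * (u⁻¹ : Aˣ) * (u : A) - 1 = x
      rw [mul_assoc, Units.inv_mul, mul_one]; ring
    · rfl
  | succ n ih =>
    intro u x
    obtain ⟨b, hb1, hb2⟩ := ih 1 (u : A)
    refine ⟨Fin.snoc b ((x + 1) * (u⁻¹ : Aˣ)), ?_, ?_⟩
    · rw [cont]
      simp only [Fin.snoc_last, Fin.snoc_castSucc]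
      rw [hb1, show (fun i : Fin (n+1) => b i.castSucc) = _ from rfl, hb2]
      rw [mul_assoc, Units.inv_mul, mul_one]; push_cast; ring
    · simp only [Fin.snoc_castSucc]
      exact hb1

/-- For every unit , non-unit , and , there is a tuple
 with  and . -/
theorem cont_pair_values {A : Type} [CommRing A] (u : Aˣ) (x : A)
    (hx : ¬IsUnit x) (n : ℕ) (hn : 2 ≤ n) :
    ∃ a : Fin n → A, cont n a = x ∧
      cont (n - 1) (fun i => a ⟨i.1, by have := i.isLt; omega⟩) = (u : A) := by
  obtain ⟨m, rfl⟩ : ∃ m, n = m + 2 := ⟨n - 2, by omega⟩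
  obtain ⟨a, h1, h2⟩ := cont_aux m u x
  exact ⟨a, h1, h2⟩
end

section
/- Let A be a finite (commutative unital) local ring, a a non-unit of A, and n ≥ 2. Then the number of n-tuples (a_1,…,a_n) ∈ A^n with K_n(a_1,…,a_n) = a equals the number of n-tuples with K_n(a_1,…,a_n) = 0. -/
open IsLocalRing in
lemma unit_sub_aux {A : Type} [CommRing A] [IsLocalRing A] {a u : A}
    (ha : ¬IsUnit a) (hu : IsUnit u) : IsUnit (a - u) := by
  by_contra h
  have h1 : a ∈ maximalIdeal A := by rwa [mem_maximalIdeal, mem_nonunits_iff]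
  have h2 : a - u ∈ maximalIdeal A := by rwa [mem_maximalIdeal, mem_nonunits_iff]
  have h3 : u ∈ maximalIdeal A := by
    have := Ideal.sub_mem _ h1 h2
    simpa using this
  rw [mem_maximalIdeal, mem_nonunits_iff] at h3
  exact h3 hu

lemma cont_dichotomy {A : Type} [CommRing A] [IsLocalRing A] :
    ∀ (m : ℕ) (s : Fin (m+1) → A),
      IsUnit (cont (m+1) s) ∨ IsUnit (cont m (fun i => s i.castSucc)) := by
  intro m
  induction m with
  | zero => intro s; right; simp [cont]
  | succ m ih =>
    intro s
    rcases ih (fun i => s i.castSucc) with h | h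
    · right; exact h
    · by_cases hp : IsUnit (cont (m+1) (fun i => s i.castSucc))
      · right; exact hp
      · left
        have : cont (m+2) s = s (Fin.last (m+1)) * cont (m+1) (fun i => s i.castSucc)
            - cont m (fun i => s i.castSucc.castSucc) := rfl
        rw [this]
        refine unit_sub_aux (fun hu => hp ?_) h
        exact isUnit_of_mul_isUnit_right hu

lemma cont_snoc {A : Type} [CommRing A] (m : ℕ) (s : Fin (m+1) → A) (b : A) :
    cont (m+2) (Fin.snoc s b) = b * cont (m+1) s - cont m (fun i => s i.castSucc) := by
  have h1 : (Fin.snoc s b : Fin (m+2) → A) (Fin.last (m+1)) = b := Fin.snoc_last _ _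
  have h2 : (fun i : Fin (m+1) => (Fin.snoc s b : Fin (m+2) → A) i.castSucc) = s := by
    funext i; exact Fin.snoc_castSucc _ _ _
  have h3 : (fun i : Fin m => (Fin.snoc s b : Fin (m+2) → A) i.castSucc.castSucc)
      = (fun i => s i.castSucc) := by
    funext i; exact Fin.snoc_castSucc _ _ _
  show (Fin.snoc s b : Fin (m+2) → A) (Fin.last (m+1)) *
      cont (m+1) (fun i => (Fin.snoc s b : Fin (m+2) → A) i.castSucc)
      - cont m (fun i => (Fin.snoc s b : Fin (m+2) → A) i.castSucc.castSucc) = _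
  rw [h1, h2, h3]

lemma cont_init_isUnit {A : Type} [CommRing A] [IsLocalRing A] {m : ℕ} {x : A}
    (hx : ¬IsUnit x) {t : Fin (m+2) → A} (ht : cont (m+2) t = x) :
    IsUnit (cont (m+1) (fun i => t i.castSucc)) := by
  rcases cont_dichotomy (m+1) t with h | h
  · rw [ht] at h; exact absurd h hx
  · exact h

noncomputable def contShiftEquiv {A : Type} [CommRing A] [IsLocalRing A] (m : ℕ) (x y : A)
    (hx : ¬IsUnit x) (hy : ¬IsUnit y) :
    {t : Fin (m+2) → A // cont (m+2) t = x} ≃ {t : Fin (m+2) → A // cont (m+2) t = y} where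
  toFun t := ⟨Fin.snoc (Fin.init t.1) (t.1 (Fin.last (m+1)) +
      (y - x) * Ring.inverse (cont (m+1) (Fin.init t.1))), by
    obtain ⟨t, ht⟩ := t
    have hp : IsUnit (cont (m+1) (fun i => t i.castSucc)) := cont_init_isUnit hx ht
    have hdef : cont (m+2) t = t (Fin.last (m+1)) * cont (m+1) (fun i => t i.castSucc)
        - cont m (fun i => t i.castSucc.castSucc) := rfl
    rw [hdef] at ht
    have hinv : Ring.inverse (cont (m+1) (fun i => t i.castSucc)) *
        cont (m+1) (fun i => t i.castSucc) = 1 := Ring.inverse_mul_cancel _ hp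
    show cont (m+2) (Fin.snoc (Fin.init t) _) = y
    rw [cont_snoc]
    show (t (Fin.last (m+1)) + (y - x) * Ring.inverse (cont (m+1) (fun i => t i.castSucc))) *
        cont (m+1) (fun i => t i.castSucc) - cont m (fun i => t i.castSucc.castSucc) = y
    have : (t (Fin.last (m+1)) + (y - x) * Ring.inverse (cont (m+1) (fun i => t i.castSucc))) *
        cont (m+1) (fun i => t i.castSucc) - cont m (fun i => t i.castSucc.castSucc)
        = (t (Fin.last (m+1)) * cont (m+1) (fun i => t i.castSucc)
            - cont m (fun i => t i.castSucc.castSucc))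
          + (y - x) * (Ring.inverse (cont (m+1) (fun i => t i.castSucc)) *
              cont (m+1) (fun i => t i.castSucc)) := by ring
    rw [this, ht, hinv]; ring⟩
  invFun t := ⟨Fin.snoc (Fin.init t.1) (t.1 (Fin.last (m+1)) +
      (x - y) * Ring.inverse (cont (m+1) (Fin.init t.1))), by
    obtain ⟨t, ht⟩ := t
    have hp : IsUnit (cont (m+1) (fun i => t i.castSucc)) := cont_init_isUnit hy ht
    have hdef : cont (m+2) t = t (Fin.last (m+1)) * cont (m+1) (fun i => t i.castSucc)
        - cont m (fun i => t i.castSucc.castSucc) := rfl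
    rw [hdef] at ht
    have hinv : Ring.inverse (cont (m+1) (fun i => t i.castSucc)) *
        cont (m+1) (fun i => t i.castSucc) = 1 := Ring.inverse_mul_cancel _ hp
    show cont (m+2) (Fin.snoc (Fin.init t) _) = x
    rw [cont_snoc]
    show (t (Fin.last (m+1)) + (x - y) * Ring.inverse (cont (m+1) (fun i => t i.castSucc))) *
        cont (m+1) (fun i => t i.castSucc) - cont m (fun i => t i.castSucc.castSucc) = x
    have : (t (Fin.last (m+1)) + (x - y) * Ring.inverse (cont (m+1) (fun i => t i.castSucc))) *
        cont (m+1) (fun i => t i.castSucc) - cont m (fun i => t i.castSucc.castSucc)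
        = (t (Fin.last (m+1)) * cont (m+1) (fun i => t i.castSucc)
            - cont m (fun i => t i.castSucc.castSucc))
          + (x - y) * (Ring.inverse (cont (m+1) (fun i => t i.castSucc)) *
              cont (m+1) (fun i => t i.castSucc)) := by ring
    rw [this, ht, hinv]; ring⟩
  left_inv := by
    rintro ⟨t, ht⟩
    apply Subtype.ext
    simp only [Fin.init_snoc, Fin.snoc_last]
    have : t (Fin.last (m+1)) + (y - x) * Ring.inverse (cont (m+1) (Fin.init t))
        + (x - y) * Ring.inverse (cont (m+1) (Fin.init t)) = t (Fin.last (m+1)) := by ring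
    rw [this, Fin.snoc_init_self]
  right_inv := by
    rintro ⟨t, ht⟩
    apply Subtype.ext
    simp only [Fin.init_snoc, Fin.snoc_last]
    have : t (Fin.last (m+1)) + (x - y) * Ring.inverse (cont (m+1) (Fin.init t))
        + (y - x) * Ring.inverse (cont (m+1) (Fin.init t)) = t (Fin.last (m+1)) := by ring
    rw [this, Fin.snoc_init_self]

/-- Over a finite local ring, for every non-unit  and , the number of
roots of  at  equals the number of roots of  at . -/
theorem card_cont_eq_nonunit {A : Type} [CommRing A] [IsLocalRing A] [Finite A]
    (x : A) (hx : ¬IsUnit x) (n : ℕ) (hn : 2 ≤ n) :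
    Nat.card {t : Fin n → A // cont n t = x} =
      Nat.card {t : Fin n → A // cont n t = 0} := by
  obtain ⟨m, rfl⟩ : ∃ m, n = m + 2 := ⟨n - 2, by omega⟩
  exact Nat.card_congr (contShiftEquiv m x 0 hx (by simp))
end

section
/- Let A be a finite commutative unital ring, u a unit of A, and n ≥ 1. The number of n-tuples (a_1,…,a_n) ∈ A^n with K_n(a_1,…,a_n) = u equals the number of (n+2)-tuples (b_1,…,b_{n+2}) ∈ A^{n+2} with M_{n+2}(b_1,…,b_{n+2}) = diag(−u^{-1}, −u). -/
lemma Mn_det {A : Type} [CommRing A] : ∀ (n : ℕ) (a : Fin n → A), (Mn n a).det = 1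
  | 0, _ => by simp [Mn]
  | n+1, a => by
    rw [Mn, Matrix.det_mul, Mn_det n, Matrix.det_fin_two_of]
    ring

lemma Mn_spec {A : Type} [CommRing A] : ∀ (n : ℕ) (a : Fin (n+1) → A),
    (Mn (n+1) a) 0 0 = cont (n+1) a ∧ (Mn (n+1) a) 1 0 = cont n (fun i => a i.castSucc)
  | 0, a => by
    constructor
    · show (Mn 1 a) 0 0 = cont 1 a
      rw [Mn, cont, Matrix.mul_apply, Fin.sum_univ_two]
      simp [Mn]
    · show (Mn 1 a) 1 0 = cont 0 _
      rw [Mn, cont, Matrix.mul_apply, Fin.sum_univ_two]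
      simp [Mn]
  | n+1, a => by
    obtain ⟨h1, h2⟩ := Mn_spec n (fun i => a i.castSucc)
    constructor
    · show (Mn (n+2) a) 0 0 = cont (n+2) a
      rw [Mn, cont, Matrix.mul_apply, Fin.sum_univ_two, h1.symm, h2.symm]
      simp
      ring
    · show (Mn (n+2) a) 1 0 = cont (n+1) (fun i => a i.castSucc)
      rw [Mn, Matrix.mul_apply, Fin.sum_univ_two, h1.symm]
      simp

lemma Mn_succ_right {A : Type} [CommRing A] : ∀ (n : ℕ) (a : Fin (n+1) → A),
    Mn (n+1) a = Mn n (fun i => a i.succ) * !![a 0, -1; 1, 0]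
  | 0, a => by
    simp [Mn]
  | n+1, a => by
    show Mn (n+2) a = Mn (n+1) (fun i => a i.succ) * _
    rw [Mn, Mn_succ_right n (fun i => a i.castSucc), ← mul_assoc]
    rw [show ((0 : Fin (n+1)).castSucc) = 0 from rfl]
    congr 1

lemma Mn_decomp {A : Type} [CommRing A] (n : ℕ) (b : Fin (n+2) → A) :
    Mn (n+2) b = !![b (Fin.last (n+1)), -1; 1, 0] *
      (Mn n (fun i => b i.succ.castSucc) * !![b 0, -1; 1, 0]) := by
  rw [Mn, Mn_succ_right n (fun i => b i.castSucc)]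
  rfl

lemma Mn00 {A : Type} [CommRing A] (n : ℕ) (a : Fin (n+1) → A) :
    (Mn (n+1) a) 0 0 = cont (n+1) a := (Mn_spec n a).1

lemma key {A : Type} [CommRing A] (u : Aˣ) (M : Matrix (Fin 2) (Fin 2) A)
    (hdet : M.det = 1) (x y : A) :
    !![y, -1; 1, 0] * (M * !![x, -1; 1, 0]) = !![-((u⁻¹ : Aˣ) : A), 0; 0, -(u : A)] ↔
      M 0 0 = (u : A) ∧ x = -((u⁻¹ : Aˣ) : A) * M 0 1 ∧ y = ((u⁻¹ : Aˣ) : A) * M 1 0 := by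
  rw [Matrix.det_fin_two] at hdet
  have hu : (u : A) * ((u⁻¹ : Aˣ) : A) = 1 := u.mul_inv
  rw [← Matrix.ext_iff]
  simp only [Fin.forall_fin_two, Matrix.mul_apply, Fin.sum_univ_two]
  norm_num
  constructor
  · rintro ⟨⟨h00, h01⟩, h10, h11⟩
    rw [h11] at h10 h01
    refine ⟨h11, ?_, ?_⟩
    · linear_combination ((u⁻¹ : Aˣ) : A) * h10 - x * hu
    · linear_combination -((u⁻¹ : Aˣ) : A) * h01 - y * hu
  · rintro ⟨h1, h2, h3⟩
    subst h2 h3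
    rw [h1] at hdet ⊢
    refine ⟨⟨?_, ?_⟩, ?_, rfl⟩
    · linear_combination -((u⁻¹ : Aˣ) : A) * hdet + (M 1 1 - ((u⁻¹ : Aˣ) : A) * M 1 0 * M 0 1) * hu
    · linear_combination (-(M 1 0)) * hu
    · linear_combination (-(M 0 1)) * hu

/-- Over a finite commutative ring, the number of roots of  at a unit 
equals the number of -tuples  with . -/
theorem card_cont_eq_unit {A : Type} [CommRing A] [Finite A] (u : Aˣ)
    (n : ℕ) (hn : 1 ≤ n) :
    Nat.card {t : Fin n → A // cont n t = (u : A)} =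
      Nat.card {b : Fin (n + 2) → A //
        Mn (n + 2) b = !![-((u⁻¹ : Aˣ) : A), 0; 0, -(u : A)]} := by
  obtain ⟨m, rfl⟩ : ∃ m, n = m + 1 := ⟨n - 1, by omega⟩
  set n := m + 1 with hnm
  have hQ : ∀ b : Fin (n + 2) → A,
      Mn (n + 2) b = !![-((u⁻¹ : Aˣ) : A), 0; 0, -(u : A)] ↔
        cont n (fun i => b i.succ.castSucc) = (u : A) ∧
        b 0 = -((u⁻¹ : Aˣ) : A) * (Mn n (fun i => b i.succ.castSucc)) 0 1 ∧
        b (Fin.last (n + 1)) = ((u⁻¹ : Aˣ) : A) * (Mn n (fun i => b i.succ.castSucc)) 1 0 := by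
    intro b
    rw [Mn_decomp, key u _ (Mn_det n _), Mn00]
  have mid_eq : ∀ (x y : A) (t : Fin n → A),
      (fun i : Fin n => (Fin.cons x (Fin.snoc t y) : Fin (n+2) → A) i.succ.castSucc) = t := by
    intro x y t
    funext i
    rw [← Fin.succ_castSucc, Fin.cons_succ, Fin.snoc_castSucc]
  refine Nat.card_congr (Equiv.ofBijective (fun t => ⟨Fin.cons
      (-((u⁻¹ : Aˣ) : A) * (Mn n t.1) 0 1)
      (Fin.snoc t.1 (((u⁻¹ : Aˣ) : A) * (Mn n t.1) 1 0)), ?_⟩) ⟨?_, ?_⟩)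
  · rw [hQ, mid_eq]
    refine ⟨t.2, ?_, ?_⟩
    · rw [Fin.cons_zero]
    · rw [← Fin.succ_last, Fin.cons_succ, Fin.snoc_last]
  · intro t s h
    have h1 := congrArg Subtype.val h
    simp only at h1
    have h3 := congrArg (fun b : Fin (n+2) → A => fun i : Fin n => b i.succ.castSucc) h1
    rw [mid_eq, mid_eq] at h3
    exact Subtype.ext h3
  · rintro ⟨b, hb⟩
    obtain ⟨h1, h2, h3⟩ := (hQ b).mp hb
    refine ⟨⟨fun i => b i.succ.castSucc, h1⟩, ?_⟩
    apply Subtype.ext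
    show Fin.cons _ (Fin.snoc _ _) = b
    funext i
    refine Fin.cases ?_ (fun j => ?_) i
    · rw [Fin.cons_zero, h2]
    · refine Fin.lastCases ?_ (fun k => ?_) j
      · rw [Fin.cons_succ, Fin.snoc_last, Fin.succ_last, h3]
      · rw [Fin.cons_succ, Fin.snoc_castSucc, Fin.succ_castSucc]
end

section
/- Let A be a finite commutative unital ring, u a unit of A, and n ≥ 1 odd. The number of n-tuples (a_1,…,a_n) ∈ A^n with K_n(a_1,…,a_n) = u equals the number of (n+2)-tuples (b_1,…,b_{n+2}) ∈ A^{n+2} with M_{n+2}(b_1,…,b_{n+2}) = Id. -/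
namespace CardContAux
variable {A : Type} [CommRing A]

lemma cont_two (a : Fin 2 → A) : cont 2 a = a 1 * a 0 - 1 := by
  show a (Fin.last 1) * cont 1 _ - cont 0 _ = _
  simp [cont]

lemma Mn_entries : ∀ (n : ℕ) (a : Fin (n+2) → A),
    Mn (n+2) a = !![cont (n+2) a, -cont (n+1) (fun i => a i.succ);
        cont (n+1) (fun i => a i.castSucc), -cont n (fun i => a i.succ.castSucc)] := by
  intro n
  induction n with
  | zero =>
    intro a
    show !![a (Fin.last 1), -1; 1, 0] * (!![_, -1; 1, 0] * 1) = _
    rw [mul_one, Matrix.mul_fin_two]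
    ext i j
    fin_cases i <;> fin_cases j <;>
      simp [cont, Fin.last] <;> ring
  | succ m ih =>
    intro a
    show !![a (Fin.last (m+2)), -1; 1, 0] * Mn (m+2) (fun i => a i.castSucc) = _
    rw [ih, Matrix.mul_fin_two]
    have hsc : ∀ (i : Fin (m+1)), a i.castSucc.succ = a i.succ.castSucc := by
      intro i; rw [Fin.succ_castSucc]
    ext i j
    fin_cases i <;> fin_cases j <;>
      simp [cont, Fin.succ_castSucc, Fin.succ_last, -Fin.castSucc_succ] <;> ring

lemma cont_succ2 (n : ℕ) (a : Fin (n+2) → A) :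
    cont (n+2) a = a (Fin.last (n+1)) * cont (n+1) (fun i => a i.castSucc)
      - cont n (fun i => a i.castSucc.castSucc) := rfl

lemma init_cons {m : ℕ} (x : A) (a : Fin (m+1) → A) :
    (fun i : Fin (m+1) => (Fin.cons x a : Fin (m+2) → A) i.castSucc)
      = Fin.cons x (fun i : Fin m => a i.castSucc) := by
  funext i
  induction i using Fin.cases with
  | zero => simp
  | succ j => rw [← Fin.succ_castSucc]; simp

lemma cont_cons : ∀ (m : ℕ) (x : A) (a : Fin (m+1) → A),
    cont (m+2) (Fin.cons x a) = x * cont (m+1) a - cont m (fun i => a i.succ) := by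
  have key : ∀ m : ℕ, (∀ (x : A) (a : Fin (m+1) → A),
      cont (m+2) (Fin.cons x a) = x * cont (m+1) a - cont m (fun i => a i.succ)) ∧
      (∀ (x : A) (a : Fin (m+2) → A),
      cont ((m+1)+2) (Fin.cons x a) = x * cont ((m+1)+1) a - cont (m+1) (fun i => a i.succ)) := by
    intro m
    induction m with
    | zero =>
      constructor
      · intro x a
        have h1 : (Fin.last 1 : Fin 2) = Fin.succ 0 := rfl
        rw [cont_succ2 0, h1, Fin.cons_succ]
        simp [cont]
        ring
      · intro x a
        have h1 : (Fin.last 2 : Fin 3) = Fin.succ 1 := rfl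
        have h2 : ((1 : Fin 2)) = Fin.succ 0 := rfl
        rw [cont_succ2 1, h1, Fin.cons_succ, init_cons, cont_succ2 0, cont_succ2 0]
        have h3 : (Fin.last 1 : Fin 2) = Fin.succ 0 := rfl
        rw [h3, Fin.cons_succ]
        simp [cont]
        ring
    | succ m ih =>
      obtain ⟨ih1, ih2⟩ := ih
      refine ⟨ih2, ?_⟩
      intro x a
      rw [cont_succ2 (m+2), init_cons]
      have hlast : (Fin.last (m+3) : Fin (m+4)) = (Fin.last (m+2)).succ := rfl
      rw [hlast, Fin.cons_succ]
      have hii : (fun i : Fin (m+2) => (Fin.cons x a : Fin (m+4) → A) i.castSucc.castSucc)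
          = Fin.cons x (fun i : Fin (m+1) => a i.castSucc.castSucc) := by
        funext i
        induction i using Fin.cases with
        | zero => simp
        | succ j => rw [← Fin.succ_castSucc, ← Fin.succ_castSucc]; simp
      rw [hii, ih2 x (fun i => a i.castSucc), ih1 x (fun i => a i.castSucc.castSucc)]
      rw [cont_succ2 (m+1), cont_succ2 m]
      have hts : (fun i : Fin (m+1) => (fun j : Fin (m+2) => a j.succ) i.castSucc)
          = (fun i : Fin (m+1) => a i.succ.castSucc) := by
        funext i; exact congrArg a (Fin.succ_castSucc i)
      have hts2 : (fun i : Fin m => (fun j : Fin (m+2) => a j.succ) i.castSucc.castSucc)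
          = (fun i : Fin m => a i.succ.castSucc.castSucc) := by
        funext i; exact congrArg a (by rw [Fin.succ_castSucc, Fin.succ_castSucc])
      have hl2 : (Fin.last (m+1)).succ = Fin.last (m+2) := Fin.succ_last (m+1)
      have hE : cont (m+1+1) (fun i : Fin (m+1+1) => a i.succ)
          = a ((Fin.last (m+1)).succ) * cont (m+1) (fun i : Fin (m+1) => a i.castSucc.succ)
            - cont m (fun i : Fin m => a i.castSucc.castSucc.succ) := cont_succ2 m _
      rw [hE]
      simp only [hl2, hts, hts2, Fin.succ_castSucc]
      ring
  intro m; exact (key m).1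

lemma det_Mn : ∀ (n : ℕ) (a : Fin n → A), (Mn n a).det = 1 := by
  intro n
  induction n with
  | zero => intro a; simp [Mn]
  | succ m ih =>
    intro a
    show (!![a (Fin.last m), -1; 1, 0] * Mn m (fun i => a i.castSucc)).det = 1
    rw [Matrix.det_mul, ih, Matrix.det_fin_two_of]
    ring

lemma cont_scale (x : Aˣ) : ∀ (m : ℕ) (a : Fin m → A),
    cont m (fun i => (if Even i.val then (x : A) else ((x⁻¹ : Aˣ) : A)) * a i)
      = (if Even m then 1 else (x : A)) * cont m a := by
  have key : ∀ m : ℕ, (∀ (a : Fin m → A),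
      cont m (fun i => (if Even i.val then (x : A) else ((x⁻¹ : Aˣ) : A)) * a i)
        = (if Even m then 1 else (x : A)) * cont m a) ∧
      (∀ (a : Fin (m+1) → A),
      cont (m+1) (fun i => (if Even i.val then (x : A) else ((x⁻¹ : Aˣ) : A)) * a i)
        = (if Even (m+1) then 1 else (x : A)) * cont (m+1) a) := by
    intro m
    induction m with
    | zero =>
      constructor
      · intro a; simp [cont]
      · intro a; simp [cont]
    | succ m ih =>
      obtain ⟨ih1, ih2⟩ := ih
      refine ⟨ih2, ?_⟩
      intro a
      rw [cont_succ2 m, cont_succ2 m]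
      have h1 : (fun i : Fin (m+1) =>
          (fun j : Fin (m+2) => (if Even j.val then (x : A) else ((x⁻¹ : Aˣ) : A)) * a j) i.castSucc)
          = (fun i : Fin (m+1) => (if Even i.val then (x : A) else ((x⁻¹ : Aˣ) : A)) * a i.castSucc) := by
        funext i; simp
      have h2 : (fun i : Fin m =>
          (fun j : Fin (m+2) => (if Even j.val then (x : A) else ((x⁻¹ : Aˣ) : A)) * a j) i.castSucc.castSucc)
          = (fun i : Fin m => (if Even i.val then (x : A) else ((x⁻¹ : Aˣ) : A)) * a i.castSucc.castSucc) := by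
        funext i; simp
      rw [h1, h2, ih2 (fun i => a i.castSucc), ih1 (fun i => a i.castSucc.castSucc)]
      have hlv : ((Fin.last (m+1)).val : ℕ) = m+1 := rfl
      by_cases hm : Even m
      · have hm1 : ¬ Even (m+1) := by simp [Nat.even_add_one, hm]
        have hm2 : Even (m+2) := by
          rcases hm with ⟨k, hk⟩; exact ⟨k+1, by omega⟩
        simp only [hlv, hm, hm1, hm2, if_true, if_false, if_neg hm1, if_pos hm, if_pos hm2]
        have : ((x⁻¹ : Aˣ) : A) * a (Fin.last (m+1)) * ((x : A) * cont (m+1) fun i => a i.castSucc)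
            = a (Fin.last (m+1)) * cont (m+1) (fun i => a i.castSucc) * (((x⁻¹ : Aˣ) : A) * (x:A)) := by ring
        rw [this, Units.inv_mul]
        ring
      · have hm1 : Even (m+1) := Nat.even_add_one.mpr hm
        have hm2 : ¬ Even (m+2) := by
          intro h; rcases h with ⟨k, hk⟩; exact hm ⟨k-1, by omega⟩
        simp only [hlv, if_neg hm, if_pos hm1, if_neg hm2]
        ring
  intro m; exact (key m).1

lemma cont_snoc (m : ℕ) (a : Fin (m+1) → A) (z : A) :
    cont (m+2) (Fin.snoc a z) = z * cont (m+1) a - cont m (fun i => a i.castSucc) := by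
  rw [cont_succ2]
  have h1 : (Fin.snoc a z : Fin (m+2) → A) (Fin.last (m+1)) = z := by simp
  have h2 : (fun i : Fin (m+1) => (Fin.snoc a z : Fin (m+2) → A) i.castSucc) = a := by
    funext i; simp
  have h3 : (fun i : Fin m => (Fin.snoc a z : Fin (m+2) → A) i.castSucc.castSucc)
      = fun i : Fin m => a i.castSucc := by
    funext i; simp
  rw [h1, h2, h3]

lemma fin_two_eq_one_iff (a b c d : A) :
    !![a, b; c, d] = 1 ↔ a = 1 ∧ b = 0 ∧ c = 0 ∧ d = 1 := by
  rw [Matrix.one_fin_two, ← Matrix.ext_iff]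
  constructor
  · intro h
    exact ⟨by simpa using h 0 0, by simpa using h 0 1, by simpa using h 1 0, by simpa using h 1 1⟩
  · rintro ⟨h1, h2, h3, h4⟩ i j
    fin_cases i <;> fin_cases j <;> simp [h1, h2, h3, h4]

lemma Mn_eq_one_iff (k : ℕ) (b : Fin (k+3) → A) :
    Mn (k+3) b = 1 ↔
      (cont (k+1) (fun i => b i.succ.castSucc) = -1 ∧
       b 0 = -cont k (fun i : Fin k => b i.succ.succ.castSucc) ∧
       b (Fin.last (k+2)) = -cont k (fun i : Fin k => b i.castSucc.succ.castSucc)) := by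
  have hM : Mn (k+3) b
      = !![cont (k+3) b, -cont (k+2) (fun i => b i.succ);
           cont (k+2) (fun i => b i.castSucc), -cont (k+1) (fun i => b i.succ.castSucc)] :=
    Mn_entries (k+1) b
  have fact1 : (fun i : Fin (k+2) => b i.castSucc)
      = Fin.cons (b 0) (fun i : Fin (k+1) => b i.succ.castSucc) := by
    funext i
    induction i using Fin.cases with
    | zero => simp
    | succ j => simp
  have fact2 : (fun i : Fin (k+2) => b i.succ)
      = Fin.snoc (fun i : Fin (k+1) => b i.succ.castSucc) (b (Fin.last (k+2))) := by
    funext i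
    induction i using Fin.lastCases with
    | last => simp [Fin.succ_last]
    | cast j => rw [Fin.snoc_castSucc]; exact congrArg b (Fin.succ_castSucc j)
  have fact3 : cont (k+2) (Fin.cons (b 0) (fun i : Fin (k+1) => b i.succ.castSucc))
      = b 0 * cont (k+1) (fun i : Fin (k+1) => b i.succ.castSucc)
        - cont k (fun i : Fin k => b i.succ.succ.castSucc) :=
    cont_cons k _ _
  have fact4 : cont (k+2) (Fin.snoc (fun i : Fin (k+1) => b i.succ.castSucc) (b (Fin.last (k+2))))
      = b (Fin.last (k+2)) * cont (k+1) (fun i : Fin (k+1) => b i.succ.castSucc)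
        - cont k (fun i : Fin k => b i.castSucc.succ.castSucc) :=
    cont_snoc k _ _
  rw [hM, fin_two_eq_one_iff]
  constructor
  · rintro ⟨h1, h2, h3, h4⟩
    have hc : cont (k+1) (fun i => b i.succ.castSucc) = -1 := by linear_combination -h4
    refine ⟨hc, ?_, ?_⟩
    · rw [fact1, fact3] at h3
      linear_combination -h3 + b 0 * hc
    · rw [fact2, fact4] at h2
      linear_combination h2 + b (Fin.last (k+2)) * hc
  · rintro ⟨hc, hb0, hbl⟩
    have hinit : cont (k+2) (fun i : Fin (k+2) => b i.castSucc) = 0 := by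
      rw [fact1, fact3]
      linear_combination b 0 * hc - hb0
    have htail : cont (k+2) (fun i : Fin (k+2) => b i.succ) = 0 := by
      rw [fact2, fact4]
      linear_combination b (Fin.last (k+2)) * hc - hbl
    have hd : (Mn (k+3) b).det = 1 := det_Mn (k+3) b
    rw [hM, Matrix.det_fin_two_of] at hd
    have h1 : cont (k+3) b = 1 := by
      linear_combination hd + cont (k+3) b * hc
        - cont (k+2) (fun i : Fin (k+2) => b i.castSucc) * htail
    exact ⟨h1, by linear_combination -htail, hinit, by linear_combination -hc⟩

/-- The main equivalence. -/
noncomputable def mainEquiv (k : ℕ) :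
    {b : Fin (k+3) → A // Mn (k+3) b = 1} ≃ {a : Fin (k+1) → A // cont (k+1) a = -1} where
  toFun b := ⟨fun i => b.1 i.succ.castSucc, ((Mn_eq_one_iff k b.1).mp b.2).1⟩
  invFun a :=
    ⟨Fin.cons (-cont k (fun i => a.1 i.succ)) (Fin.snoc a.1 (-cont k (fun i => a.1 i.castSucc))), by
      set b' : Fin (k+3) → A :=
        Fin.cons (-cont k (fun i => a.1 i.succ))
          (Fin.snoc a.1 (-cont k (fun i => a.1 i.castSucc))) with hb'
      have hinner : ∀ j : Fin (k+1), b' j.succ.castSucc = a.1 j := by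
        intro j
        rw [hb', ← Fin.succ_castSucc, Fin.cons_succ, Fin.snoc_castSucc]
      rw [Mn_eq_one_iff k b']
      refine ⟨?_, ?_, ?_⟩
      · have : (fun i : Fin (k+1) => b' i.succ.castSucc) = a.1 := funext hinner
        rw [this]; exact a.2
      · have h0 : b' 0 = -cont k (fun i => a.1 i.succ) := by rw [hb', Fin.cons_zero]
        have h1 : (fun i : Fin k => b' i.succ.succ.castSucc) = fun i => a.1 i.succ := by
          funext i; exact hinner i.succ
        rw [h0, h1]
      · have h0 : b' (Fin.last (k+2)) = -cont k (fun i => a.1 i.castSucc) := by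
          rw [hb', ← Fin.succ_last, Fin.cons_succ, Fin.snoc_last]
        have h1 : (fun i : Fin k => b' i.castSucc.succ.castSucc) = fun i => a.1 i.castSucc := by
          funext i; exact hinner i.castSucc
        rw [h0, h1]⟩
  left_inv b := by
    obtain ⟨h1, h2, h3⟩ := (Mn_eq_one_iff k b.1).mp b.2
    apply Subtype.ext
    funext i
    dsimp only
    induction i using Fin.cases with
    | zero => rw [Fin.cons_zero]; exact h2.symm
    | succ j =>
      rw [Fin.cons_succ]
      induction j using Fin.lastCases with
      | last => rw [Fin.snoc_last, Fin.succ_last]; exact h3.symm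
      | cast c => rw [Fin.snoc_castSucc, Fin.succ_castSucc]
  right_inv a := by
    apply Subtype.ext
    funext i
    dsimp only
    show (Fin.cons _ (Fin.snoc a.1 _) : Fin (k+3) → A) i.succ.castSucc = a.1 i
    rw [← Fin.succ_castSucc, Fin.cons_succ, Fin.snoc_castSucc]

/-- Scaling equivalence on tuples by a unit. -/
def scaleEquiv (x : Aˣ) (m : ℕ) : (Fin m → A) ≃ (Fin m → A) where
  toFun a := fun i => (if Even i.val then (x : A) else ((x⁻¹ : Aˣ) : A)) * a i
  invFun a := fun i => (if Even i.val then ((x⁻¹ : Aˣ) : A) else (x : A)) * a i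
  left_inv a := by
    funext i
    by_cases h : Even i.val
    · simp only [h, if_true]; exact Units.inv_mul_cancel_left x (a i)
    · simp only [h, if_false]; exact Units.mul_inv_cancel_left x (a i)
  right_inv a := by
    funext i
    by_cases h : Even i.val
    · simp only [h, if_true]; exact Units.mul_inv_cancel_left x (a i)
    · simp only [h, if_false]; exact Units.inv_mul_cancel_left x (a i)

end CardContAux

open CardContAux in
/-- Over a finite commutative ring, for  odd, the number of roots of
 at a unit  equals the number of -tuples  with
. -/
theorem card_cont_eq_unit_odd {A : Type} [CommRing A] [Finite A] (u : Aˣ)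
    (n : ℕ) (hn : 1 ≤ n) (hodd : Odd n) :
    Nat.card {t : Fin n → A // cont n t = (u : A)} =
      Nat.card {b : Fin (n + 2) → A // Mn (n + 2) b = 1} := by
  obtain ⟨k, rfl⟩ : ∃ k, n = k + 1 := ⟨n - 1, by omega⟩
  have hne : ¬ Even (k+1) := Nat.not_even_iff_odd.mpr hodd
  have step1 : Nat.card {b : Fin (k+1+2) → A // Mn (k+1+2) b = 1}
      = Nat.card {a : Fin (k+1) → A // cont (k+1) a = -1} :=
    Nat.card_congr (mainEquiv k)
  have hmul : ∀ a : Fin (k+1) → A,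
      cont (k+1) (scaleEquiv (-u) (k+1) a) = ((-u : Aˣ) : A) * cont (k+1) a := by
    intro a
    have := cont_scale (-u) (k+1) a
    rwa [if_neg hne] at this
  have step2 : Nat.card {a : Fin (k+1) → A // cont (k+1) a = -1}
      = Nat.card {t : Fin (k+1) → A // cont (k+1) t = (u : A)} := by
    apply Nat.card_congr
    refine Equiv.subtypeEquiv (scaleEquiv (-u) (k+1)) ?_
    intro a
    rw [hmul a]
    constructor
    · intro h; rw [h]; simp
    · intro h
      have h2 : ((-u : Aˣ) : A) * cont (k+1) a = ((-u : Aˣ) : A) * (-1) := by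
        rw [h]; simp
      exact (Units.mul_right_inj (-u)).mp h2
  rw [step1, step2]
end

section
/- For every prime p, every m ≥ 2, and every n ≥ 1, the number of roots of K_n over Z/p^m Z equals p^{n−1} times the number of roots of K_n over Z/p^{m−1} Z; consequently r_n(Z/p^m Z) = p^{(m−1)(n−1)}(p^n + (−1)^{n+1})/(p+1). -/
section Basic
variable {A : Type} [CommRing A] {B : Type} [CommRing B]

def bcont {A : Type} [CommRing A] : (k : ℕ) → (Fin k → A) → A
  | 0, _ => 0
  | k+1, t => cont k (fun i => t i.castSucc)

lemma cont_succ (k : ℕ) (t : Fin (k+1) → A) :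
    cont (k+1) t = t (Fin.last k) * cont k (Fin.init t) - bcont k (Fin.init t) := by
  cases k with
  | zero => simp [cont, bcont]
  | succ j => rfl

lemma cont_snoc_s18 (k : ℕ) (t' : Fin k → A) (x : A) :
    cont (k+1) (Fin.snoc t' x) = x * cont k t' - bcont k t' := by
  rw [cont_succ, Fin.init_snoc, Fin.snoc_last]

lemma cont_bcont_ne_zero [Nontrivial A] :
    ∀ (k : ℕ) (t' : Fin k → A), ¬(cont k t' = 0 ∧ bcont k t' = 0) := by
  intro k
  induction k with
  | zero => intro t ⟨h1, _⟩; exact one_ne_zero h1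
  | succ j ih =>
    rintro t ⟨h1, h2⟩
    have hb : bcont (j+1) t = cont j (Fin.init t) := rfl
    rw [cont_succ] at h1
    rw [hb] at h2
    rw [h2, mul_zero, zero_sub, neg_eq_zero] at h1
    exact ih (Fin.init t) ⟨h2, h1⟩

lemma map_cont (f : A →+* B) : ∀ (n : ℕ) (t : Fin n → A), f (cont n t) = cont n (f ∘ t)
  | 0, t => by simp [cont]
  | 1, t => by simp [cont]
  | (n+2), t => by
    rw [cont, map_sub, map_mul, map_cont f (n+1), map_cont f n]; rfl

lemma map_bcont (f : A →+* B) (k : ℕ) (t : Fin k → A) : f (bcont k t) = bcont k (f ∘ t) := by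
  cases k with
  | zero => simp [bcont]
  | succ j => rw [bcont, map_cont]; rfl

end Basic

section FieldCase
variable {K : Type} [Field K]

lemma cont_init_ne_zero (k : ℕ) (t : Fin (k+1) → K) (ht : cont (k+1) t = 0) :
    cont k (Fin.init t) ≠ 0 := by
  intro h
  rw [cont_succ, h, mul_zero, zero_sub, neg_eq_zero] at ht
  exact cont_bcont_ne_zero k (Fin.init t) ⟨h, ht⟩

lemma card_field_step (k : ℕ) :
    Nat.card {t : Fin (k+1) → K // cont (k+1) t = 0} =
      Nat.card {t' : Fin k → K // cont k t' ≠ 0} := by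
  apply Nat.card_eq_of_bijective
    (fun t => (⟨Fin.init t.1, cont_init_ne_zero k t.1 t.2⟩ :
      {t' : Fin k → K // cont k t' ≠ 0}))
  constructor
  · rintro ⟨t1, h1⟩ ⟨t2, h2⟩ h
    have hinit : Fin.init t1 = Fin.init t2 := congrArg Subtype.val h
    have hA := cont_init_ne_zero k t1 h1
    rw [cont_succ, sub_eq_zero] at h1 h2
    have hlast : t1 (Fin.last k) = t2 (Fin.last k) := by
      apply mul_right_cancel₀ hA
      rw [h1, hinit, h2]
    ext1
    calc t1 = Fin.snoc (Fin.init t1) (t1 (Fin.last k)) := (Fin.snoc_init_self t1).symm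
    _ = Fin.snoc (Fin.init t2) (t2 (Fin.last k)) := by rw [hinit, hlast]
    _ = t2 := Fin.snoc_init_self t2
  · rintro ⟨t', ht'⟩
    refine ⟨⟨Fin.snoc t' ((cont k t')⁻¹ * bcont k t'), ?_⟩, ?_⟩
    · rw [cont_snoc_s18]; field_simp; simp
    · apply Subtype.ext; simp

lemma card_roots_field (p : ℕ) (hp : p.Prime) :
    ∀ n : ℕ, ((p:ℤ)+1) * (Nat.card {t : Fin n → ZMod p // cont n t = 0} : ℤ) =
      (p:ℤ)^n + (-1)^(n+1) := by
  haveI : Fact p.Prime := ⟨hp⟩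
  intro n
  induction n with
  | zero =>
    haveI : IsEmpty {t : Fin 0 → ZMod p // cont 0 t = 0} :=
      ⟨fun t => one_ne_zero t.2⟩
    simp [Nat.card_of_isEmpty]
  | succ k ih =>
    rw [card_field_step]
    have h1 : Nat.card {t' : Fin k → ZMod p // cont k t' ≠ 0} =
        p^k - Nat.card {t' : Fin k → ZMod p // cont k t' = 0} := by
      rw [Nat.card_eq_fintype_card, Nat.card_eq_fintype_card,
        Fintype.card_subtype_compl, Fintype.card_fun, ZMod.card, Fintype.card_fin]
    have hle : Nat.card {t' : Fin k → ZMod p // cont k t' = 0} ≤ p^k := by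
      rw [Nat.card_eq_fintype_card]
      calc Fintype.card {t' : Fin k → ZMod p // cont k t' = 0}
          ≤ Fintype.card (Fin k → ZMod p) := Fintype.card_subtype_le _
        _ = p ^ k := by rw [Fintype.card_fun, ZMod.card, Fintype.card_fin]
    rw [h1]
    push_cast [Nat.cast_sub hle]
    linear_combination (-1 : ℤ) * ih

end FieldCase

section PrimePow
variable (p : ℕ)

lemma isUnit_of_red_ne_zero (hp : p.Prime) (e : ℕ) (he : e ≠ 0)
    (f : ZMod (p^e) →+* ZMod p) (x : ZMod (p^e)) (h : f x ≠ 0) : IsUnit x := by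
  haveI : NeZero (p^e) := ⟨pow_ne_zero e hp.pos.ne'⟩
  rw [RingHom.ext_zmod f (ZMod.castHom (dvd_pow_self p he) (ZMod p))] at h
  obtain ⟨v, rfl⟩ : ∃ v : ℕ, (v : ZMod (p^e)) = x := ⟨x.val, ZMod.natCast_rightInverse x⟩
  rw [map_natCast] at h
  rw [ZMod.isUnit_iff_coprime, Nat.coprime_pow_right_iff (Nat.pos_of_ne_zero he),
      Nat.coprime_comm, hp.coprime_iff_not_dvd]
  intro hd
  exact h ((ZMod.natCast_eq_zero_iff v p).mpr hd)

variable (j k : ℕ)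

local notation "π" => ZMod.castHom (pow_dvd_pow p (Nat.le_succ (j+1))) (ZMod (p^(j+1)))
local notation "ρ" => ZMod.castHom (dvd_pow_self p (Nat.succ_ne_zero j)) (ZMod p)

lemma pi_surj (hp : p.Prime) : Function.Surjective (π : ZMod (p^(j+2)) →+* ZMod (p^(j+1))) := by
  haveI : NeZero (p^(j+1)) := ⟨pow_ne_zero _ hp.pos.ne'⟩
  intro c
  obtain ⟨v, rfl⟩ : ∃ v : ℕ, (v : ZMod (p^(j+1))) = c := ⟨c.val, ZMod.natCast_rightInverse c⟩
  exact ⟨(v : ZMod (p^(j+2))), map_natCast _ v⟩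

lemma card_pi_fiber (hp : p.Prime) (c : ZMod (p^(j+1))) :
    Nat.card {x : ZMod (p^(j+2)) // π x = c} = p := by
  classical
  haveI : NeZero (p^(j+1)) := ⟨pow_ne_zero _ hp.pos.ne'⟩
  haveI : NeZero (p^(j+2)) := ⟨pow_ne_zero _ hp.pos.ne'⟩
  -- all fibers are equivalent
  have key : ∀ c' : ZMod (p^(j+1)),
      Nonempty ({x : ZMod (p^(j+2)) // π x = c'} ≃ {x : ZMod (p^(j+2)) // π x = 0}) := by
    intro c'
    obtain ⟨x₀, hx₀⟩ := pi_surj p j hp c'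
    exact ⟨⟨fun x => ⟨x.1 - x₀, by rw [map_sub, x.2, hx₀, sub_self]⟩,
      fun y => ⟨y.1 + x₀, by rw [map_add, y.2, hx₀, zero_add]⟩,
      fun x => by apply Subtype.ext; simp,
      fun y => by apply Subtype.ext; simp⟩⟩
  have total : Fintype.card (ZMod (p^(j+2))) =
      Fintype.card (Σ c' : ZMod (p^(j+1)), {x : ZMod (p^(j+2)) // π x = c'}) :=
    Fintype.card_congr (Equiv.sigmaFiberEquiv _).symm
  rw [Fintype.card_sigma] at total
  have heach : ∀ c' : ZMod (p^(j+1)),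
      Fintype.card {x : ZMod (p^(j+2)) // π x = c'} =
      Fintype.card {x : ZMod (p^(j+2)) // π x = 0} :=
    fun c' => Fintype.card_congr (key c').some
  rw [Finset.sum_congr rfl (fun c' _ => heach c'), Finset.sum_const, Finset.card_univ,
    ZMod.card, ZMod.card, smul_eq_mul] at total
  have h0 : Fintype.card {x : ZMod (p^(j+2)) // π x = 0} = p := by
    refine Nat.eq_of_mul_eq_mul_left (pow_pos hp.pos (j+1)) ?_
    rw [← total]; ring
  rw [Nat.card_eq_fintype_card, heach c, h0]

end PrimePow
section MainCount
variable (p j k : ℕ)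

local notation "π" => ZMod.castHom (pow_dvd_pow p (Nat.le_succ (j+1))) (ZMod (p^(j+1)))
local notation "ρ" => ZMod.castHom (dvd_pow_self p (Nat.succ_ne_zero j)) (ZMod p)

lemma fiber_card (hp : p.Prime) (s : Fin (k+1) → ZMod (p^(j+1)))
    (hs : cont (k+1) s = 0) :
    Nat.card {t : Fin (k+1) → ZMod (p^(j+2)) // cont (k+1) t = 0 ∧ π ∘ t = s} = p ^ k := by
  haveI : Fact p.Prime := ⟨hp⟩
  haveI : NeZero (p^(j+1)) := ⟨pow_ne_zero _ hp.pos.ne'⟩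
  haveI : NeZero (p^(j+2)) := ⟨pow_ne_zero _ hp.pos.ne'⟩
  -- reduced root mod p
  have hu : cont (k+1) ((ρ : ZMod (p^(j+1)) →+* ZMod p) ∘ s) = 0 := by
    rw [← map_cont, hs, map_zero]
  have hA0 : cont k (Fin.init ((ρ : ZMod (p^(j+1)) →+* ZMod p) ∘ s)) ≠ 0 :=
    cont_init_ne_zero k _ hu
  have hinit_eq : Fin.init ((ρ : ZMod (p^(j+1)) →+* ZMod p) ∘ s)
      = (ρ : ZMod (p^(j+1)) →+* ZMod p) ∘ Fin.init s := rfl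
  have hAs : IsUnit (cont k (Fin.init s)) := by
    refine isUnit_of_red_ne_zero p hp (j+1) (Nat.succ_ne_zero j) ρ _ ?_
    rw [map_cont]
    rw [hinit_eq] at hA0
    exact hA0
  -- any lift of `Fin.init s` has unit leading continuant
  have hA : ∀ t' : Fin k → ZMod (p^(j+2)), (π : _ →+* _) ∘ t' = Fin.init s →
      IsUnit (cont k t') := by
    intro t' ht'
    refine isUnit_of_red_ne_zero p hp (j+2) (by omega)
      ((ρ : ZMod (p^(j+1)) →+* ZMod p).comp π) _ ?_
    rw [map_cont]
    have : ((ρ : ZMod (p^(j+1)) →+* ZMod p).comp π) ∘ t'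
        = (ρ : ZMod (p^(j+1)) →+* ZMod p) ∘ Fin.init s := by
      funext i
      show (ρ : ZMod (p^(j+1)) →+* ZMod p) ((π : _ →+* _) (t' i)) = _
      rw [show (π : _ →+* _) (t' i) = Fin.init s i from congrFun ht' i]
      rfl
    rw [this, ← hinit_eq]
    exact hA0
  have hcard : Nat.card {t : Fin (k+1) → ZMod (p^(j+2)) // cont (k+1) t = 0 ∧ π ∘ t = s}
      = Nat.card {t' : Fin k → ZMod (p^(j+2)) // (π : _ →+* _) ∘ t' = Fin.init s} := by
    apply Nat.card_eq_of_bijective (fun t => ⟨Fin.init t.1, by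
      funext i
      show (π : _ →+* _) (t.1 i.castSucc) = s i.castSucc
      exact congrFun t.2.2 i.castSucc⟩)
    constructor
    · rintro ⟨t1, ht1, hf1⟩ ⟨t2, ht2, hf2⟩ h
      have hinit : Fin.init t1 = Fin.init t2 := congrArg Subtype.val h
      have hu1 : IsUnit (cont k (Fin.init t1)) := by
        apply hA; funext i; exact congrFun hf1 i.castSucc
      rw [cont_succ, sub_eq_zero] at ht1 ht2
      have hlast : t1 (Fin.last k) = t2 (Fin.last k) := by
        refine hu1.mul_right_cancel ?_
        rw [ht1, hinit, ht2]
      apply Subtype.ext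
      calc t1 = Fin.snoc (Fin.init t1) (t1 (Fin.last k)) := (Fin.snoc_init_self t1).symm
      _ = Fin.snoc (Fin.init t2) (t2 (Fin.last k)) := by rw [hinit, hlast]
      _ = t2 := Fin.snoc_init_self t2
    · rintro ⟨t', ht'⟩
      have hu1 : IsUnit (cont k t') := hA t' ht'
      set x : ZMod (p^(j+2)) := ↑hu1.unit⁻¹ * bcont k t' with hx
      have hxA : x * cont k t' = bcont k t' := by
        rw [hx, mul_comm (↑hu1.unit⁻¹) (bcont k t'), mul_assoc,
          IsUnit.val_inv_mul, mul_one]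
      have hroot : cont (k+1) (Fin.snoc t' x) = 0 := by
        rw [cont_snoc_s18, hxA, sub_self]
      have hfib : (π : _ →+* _) ∘ Fin.snoc t' x = s := by
        funext i
        refine Fin.lastCases ?_ ?_ i
        · simp only [Function.comp_apply, Fin.snoc_last]
          refine hAs.mul_right_cancel ?_
          have h1 : (π : _ →+* _) x * cont k (Fin.init s) = bcont k (Fin.init s) := by
            have hcA : (π : _ →+* _) (cont k t') = cont k (Fin.init s) := by
              rw [map_cont, ht']
            have hcB : (π : _ →+* _) (bcont k t') = bcont k (Fin.init s) := by
              rw [map_bcont, ht']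
            rw [← hcA, ← map_mul, hxA, hcB]
          have h2 : s (Fin.last k) * cont k (Fin.init s) = bcont k (Fin.init s) := by
            have := hs
            rw [cont_succ, sub_eq_zero] at this
            exact this
          rw [h1, h2]
        · intro i
          simp only [Function.comp_apply, Fin.snoc_castSucc]
          exact congrFun ht' i
      refine ⟨⟨Fin.snoc t' x, hroot, hfib⟩, ?_⟩
      apply Subtype.ext
      simp
  rw [hcard]
  -- the set of lifts of `Fin.init s` has cardinality `p^k`
  have e0 : {t' : Fin k → ZMod (p^(j+2)) // (π : _ →+* _) ∘ t' = Fin.init s}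
      ≃ {t' : Fin k → ZMod (p^(j+2)) // ∀ i, (π : _ →+* _) (t' i) = Fin.init s i} :=
    Equiv.subtypeEquivRight (fun t' => funext_iff)
  have e1 : {t' : Fin k → ZMod (p^(j+2)) // (π : _ →+* _) ∘ t' = Fin.init s}
      ≃ ∀ i : Fin k, {x : ZMod (p^(j+2)) // (π : _ →+* _) x = Fin.init s i} :=
    e0.trans (Equiv.subtypePiEquivPi (p := fun i x => (π : _ →+* _) x = Fin.init s i))
  rw [Nat.card_congr e1, Nat.card_pi]
  have : ∀ i : Fin k, Nat.card {x : ZMod (p^(j+2)) // (π : _ →+* _) x = Fin.init s i} = p :=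
    fun i => card_pi_fiber p j hp (Fin.init s i)
  rw [Finset.prod_congr rfl (fun i _ => this i), Finset.prod_const, Finset.card_univ,
    Fintype.card_fin]

lemma step_card (hp : p.Prime) :
    Nat.card {t : Fin (k+1) → ZMod (p^(j+2)) // cont (k+1) t = 0} =
      p ^ k * Nat.card {t : Fin (k+1) → ZMod (p^(j+1)) // cont (k+1) t = 0} := by
  classical
  haveI : NeZero (p^(j+1)) := ⟨pow_ne_zero _ hp.pos.ne'⟩
  haveI : NeZero (p^(j+2)) := ⟨pow_ne_zero _ hp.pos.ne'⟩
  set Φ : {t : Fin (k+1) → ZMod (p^(j+2)) // cont (k+1) t = 0} →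
      {t : Fin (k+1) → ZMod (p^(j+1)) // cont (k+1) t = 0} :=
    fun t => ⟨(π : _ →+* _) ∘ t.1, by rw [← map_cont, t.2, map_zero]⟩ with hΦ
  rw [Nat.card_congr (Equiv.sigmaFiberEquiv Φ).symm]
  rw [Nat.card_eq_fintype_card, Fintype.card_sigma]
  have heach : ∀ s : {t : Fin (k+1) → ZMod (p^(j+1)) // cont (k+1) t = 0},
      Fintype.card {t // Φ t = s} = p ^ k := by
    intro s
    have e2 : {t // Φ t = s} ≃
        {t : Fin (k+1) → ZMod (p^(j+2)) // cont (k+1) t = 0 ∧ (π : _ →+* _) ∘ t = s.1} :=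
      ⟨fun t => ⟨t.1.1, t.1.2, congrArg Subtype.val t.2⟩,
       fun t => ⟨⟨t.1, t.2.1⟩, Subtype.ext t.2.2⟩,
       fun t => by apply Subtype.ext; rfl, fun t => by apply Subtype.ext; rfl⟩
    rw [← Nat.card_eq_fintype_card, Nat.card_congr e2]
    exact fiber_card p j k hp s.1 s.2
  rw [Finset.sum_congr rfl (fun s _ => heach s), Finset.sum_const, Finset.card_univ,
    smul_eq_mul, ← Nat.card_eq_fintype_card, mul_comm]

end MainCount

lemma formula_all (p : ℕ) (hp : p.Prime) (k : ℕ) : ∀ j : ℕ,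
    ((p:ℤ)+1) * (Nat.card {t : Fin (k+1) → ZMod (p^(j+1)) // cont (k+1) t = 0} : ℤ) =
      (p:ℤ)^(j*k) * ((p:ℤ)^(k+1) + (-1)^(k+2)) := by
  intro j
  induction j with
  | zero =>
    have e : (p:ℕ)^(0+1) = p := by norm_num
    rw [e, card_roots_field p hp (k+1)]
    ring
  | succ i ih =>
    rw [step_card p i k hp]
    push_cast
    linear_combination ((p:ℤ)^k) * ih

/-- For a prime `p`, `m ≥ 2` and `n ≥ 1`:
`rₙ(ℤ/pᵐℤ) = p^{n−1}·rₙ(ℤ/p^{m−1}ℤ)`, and consequently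
`rₙ(ℤ/pᵐℤ) = p^{(m−1)(n−1)}(pⁿ + (−1)^{n+1})/(p+1)` (stated multiplied
through by `p + 1`). -/
theorem card_cont_roots_zmod_pow (p : ℕ) (hp : p.Prime) (m : ℕ) (hm : 2 ≤ m)
    (n : ℕ) (hn : 1 ≤ n) :
    Nat.card {t : Fin n → ZMod (p ^ m) // cont n t = 0} =
      p ^ (n - 1) * Nat.card {t : Fin n → ZMod (p ^ (m - 1)) // cont n t = 0} ∧
    ((p : ℤ) + 1) * (Nat.card {t : Fin n → ZMod (p ^ m) // cont n t = 0} : ℤ) =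
      (p : ℤ) ^ ((m - 1) * (n - 1)) * ((p : ℤ) ^ n + (-1) ^ (n + 1)) := by
  obtain ⟨k, rfl⟩ : ∃ k, n = k + 1 := ⟨n - 1, (Nat.succ_pred_eq_of_pos hn).symm⟩
  obtain ⟨j, rfl⟩ : ∃ j, m = j + 2 := ⟨m - 2, by omega⟩
  have h1 : (j + 2) - 1 = j + 1 := rfl
  have h2 : (k + 1) - 1 = k := rfl
  rw [h1, h2]
  refine ⟨step_card p j k hp, ?_⟩
  have := formula_all p hp k (j + 1)
  rw [this]
end
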